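/- arXiv:1301.7235 — 2 statements merged into one kernel-verified Lean document; each statement's English description precedes it below -/
import Mathlib

section
/- Let W be a finite-dimensional real vector space, V := ℂ ⊗[ℝ] W its complexification, and σ : V → V the conjugation, i.e., the conjugate-semilinear involution determined by σ(c ⊗ w) = conj(c) ⊗ w. Let F be a complex subspace of V with F ⊓ σ(F) = ⊥ and F ⊔ σ(F) = ⊤. Let L be an additive subgroup of W which is a ℤ-lattice, i.e., L is discrete (for the canonical topology of W) and spans W over ℝ. Then the image of L under the composite map W → V → V ⧸ F (w ↦ class of 1 ⊗ w) is a discrete additive subgroup of the finite-dimensional complex vector space V ⧸ F equipped with its canonical topology. -/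
open TensorProduct

/-- Let `W` be a finite-dimensional real vector space (with its canonical topology,
i.e. any Hausdorff topological vector space topology), `V = ℂ ⊗[ℝ] W` its
complexification with conjugation `σ`, and `F` a complex subspace with
`F ⊓ σ(F) = ⊥` and `F ⊔ σ(F) = ⊤`.  If `L` is a lattice in `W` (a discrete
additive subgroup spanning `W` over `ℝ`), then the image of `L` in the
finite-dimensional complex vector space `V ⧸ F` (with its canonical topology)
under `w ↦ [1 ⊗ w]` is a discrete additive subgroup. -/
theorem lattice_image_discrete_in_quotient
    (W : Type*) [AddCommGroup W] [Module ℝ W] [FiniteDimensional ℝ W]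
    [TopologicalSpace W] [IsTopologicalAddGroup W] [ContinuousSMul ℝ W] [T2Space W]
    (σ : (ℂ ⊗[ℝ] W) →ₛₗ[starRingEnd ℂ] (ℂ ⊗[ℝ] W))
    (hσ : ∀ (c : ℂ) (w : W), σ (c ⊗ₜ[ℝ] w) = (starRingEnd ℂ c) ⊗ₜ[ℝ] w)
    (F : Submodule ℂ (ℂ ⊗[ℝ] W))
    (hinf : F ⊓ F.map σ = ⊥) (hsup : F ⊔ F.map σ = ⊤)
    [TopologicalSpace ((ℂ ⊗[ℝ] W) ⧸ F)] [IsTopologicalAddGroup ((ℂ ⊗[ℝ] W) ⧸ F)]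
    [ContinuousSMul ℂ ((ℂ ⊗[ℝ] W) ⧸ F)] [T2Space ((ℂ ⊗[ℝ] W) ⧸ F)]
    (L : AddSubgroup W) (hLdisc : DiscreteTopology L)
    (hLspan : Submodule.span ℝ (L : Set W) = ⊤) :
    DiscreteTopology
      (L.map ((F.mkQ).toAddMonoidHom.comp (TensorProduct.mk ℝ ℂ W 1).toAddMonoidHom)) := by
  haveI : ContinuousSMul ℝ ((ℂ ⊗[ℝ] W) ⧸ F) := IsScalarTower.continuousSMul ℂ
  -- the real-linear map `W → V ⧸ F`
  set f : W →ₗ[ℝ] ((ℂ ⊗[ℝ] W) ⧸ F) :=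
    (F.mkQ.restrictScalars ℝ).comp (TensorProduct.mk ℝ ℂ W 1) with hf
  -- injectivity of `w ↦ 1 ⊗ w`
  have hmkinj : Function.Injective fun w : W => (1 : ℂ) ⊗ₜ[ℝ] w := by
    intro a b hab
    have := congrArg (TensorProduct.lid ℝ W ∘ Complex.reLm.rTensor W) hab
    simpa using this
  -- injectivity of `f`
  have hker : LinearMap.ker f = ⊥ := by
    rw [LinearMap.ker_eq_bot]
    intro a b hab
    have ha : (1 : ℂ) ⊗ₜ[ℝ] a - (1 : ℂ) ⊗ₜ[ℝ] b ∈ F := by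
      have : F.mkQ ((1 : ℂ) ⊗ₜ[ℝ] a - (1 : ℂ) ⊗ₜ[ℝ] b) = 0 := by
        have : f a = f b := hab
        simp only [hf, LinearMap.comp_apply, LinearMap.restrictScalars_apply,
          TensorProduct.mk_apply] at this
        rw [map_sub, this, sub_self]
      rwa [← Submodule.Quotient.mk_eq_zero F] at *
    have hσfix : σ ((1 : ℂ) ⊗ₜ[ℝ] a - (1 : ℂ) ⊗ₜ[ℝ] b)
        = (1 : ℂ) ⊗ₜ[ℝ] a - (1 : ℂ) ⊗ₜ[ℝ] b := by
      rw [map_sub, hσ, hσ]; simp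
    have hmem : (1 : ℂ) ⊗ₜ[ℝ] a - (1 : ℂ) ⊗ₜ[ℝ] b ∈ F ⊓ F.map σ := by
      refine ⟨ha, ⟨_, ha, hσfix⟩⟩
    rw [hinf, Submodule.mem_bot, sub_eq_zero] at hmem
    exact hmkinj hmem
  -- `f` is a closed embedding
  have hemb : Topology.IsEmbedding f :=
    (LinearMap.isClosedEmbedding_of_injective hker).toIsEmbedding
  -- transport discreteness along the embedding
  set S := L.map ((F.mkQ).toAddMonoidHom.comp (TensorProduct.mk ℝ ℂ W 1).toAddMonoidHom)
  have hset : (S : Set ((ℂ ⊗[ℝ] W) ⧸ F)) = Set.range (fun x : L => f x) := by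
    ext y
    simp only [Set.mem_range, AddSubgroup.coe_map, Set.mem_image, SetLike.mem_coe]
    constructor
    · rintro ⟨w, hw, rfl⟩; exact ⟨⟨w, hw⟩, rfl⟩
    · rintro ⟨⟨w, hw⟩, rfl⟩; exact ⟨w, hw, rfl⟩
  have hembL : Topology.IsEmbedding (fun x : L => f x) :=
    hemb.comp Topology.IsEmbedding.subtypeVal
  have hd : DiscreteTopology (Set.range (fun x : L => f x)) :=
    (Topology.IsEmbedding.toHomeomorph hembL).symm.isEmbedding.discreteTopology
  rw [← hset] at hd
  exact hd
end

section
/- Let W be a finite-dimensional real vector space, V := ℂ ⊗[ℝ] W its complexification, and σ : V → V the conjugation, i.e., the conjugate-semilinear involution determined by σ(c ⊗ w) = conj(c) ⊗ w. Let F be a complex subspace of V with F ⊓ σ(F) = ⊥ and F ⊔ σ(F) = ⊤. Let L be an additive subgroup of W which is a ℤ-lattice, i.e., L is discrete and spans W over ℝ. Let Λ denote the image of L under the map W → V ⧸ F (w ↦ class of 1 ⊗ w). Then the quotient topological additive group (V ⧸ F) ⧸ Λ, equipped with the quotient topology, is compact and Hausdorff. -/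
set_option maxHeartbeats 1000000


open TensorProduct

/-- With `W` a finite-dimensional real vector space, `V = ℂ ⊗[ℝ] W`, `σ` the
conjugation, `F` a complex subspace with `F ⊓ σ(F) = ⊥` and `F ⊔ σ(F) = ⊤`,
and `L` a lattice in `W`, the quotient of `V ⧸ F` (with its canonical topology)
by the image `Λ` of `L` under `w ↦ [1 ⊗ w]`, equipped with the quotient
topology, is a compact Hausdorff topological group: the intermediate Jacobian
is a compact complex torus. -/
theorem intermediate_jacobian_compact_hausdorff
    (W : Type*) [AddCommGroup W] [Module ℝ W] [FiniteDimensional ℝ W]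
    [TopologicalSpace W] [IsTopologicalAddGroup W] [ContinuousSMul ℝ W] [T2Space W]
    (σ : (ℂ ⊗[ℝ] W) →ₛₗ[starRingEnd ℂ] (ℂ ⊗[ℝ] W))
    (hσ : ∀ (c : ℂ) (w : W), σ (c ⊗ₜ[ℝ] w) = (starRingEnd ℂ c) ⊗ₜ[ℝ] w)
    (F : Submodule ℂ (ℂ ⊗[ℝ] W))
    (hinf : F ⊓ F.map σ = ⊥) (hsup : F ⊔ F.map σ = ⊤)
    [TopologicalSpace ((ℂ ⊗[ℝ] W) ⧸ F)] [IsTopologicalAddGroup ((ℂ ⊗[ℝ] W) ⧸ F)]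
    [ContinuousSMul ℂ ((ℂ ⊗[ℝ] W) ⧸ F)] [T2Space ((ℂ ⊗[ℝ] W) ⧸ F)]
    (L : AddSubgroup W) (hLdisc : DiscreteTopology L)
    (hLspan : Submodule.span ℝ (L : Set W) = ⊤) :
    CompactSpace
        (((ℂ ⊗[ℝ] W) ⧸ F) ⧸
          (L.map ((F.mkQ).toAddMonoidHom.comp (TensorProduct.mk ℝ ℂ W 1).toAddMonoidHom))) ∧
      T2Space
        (((ℂ ⊗[ℝ] W) ⧸ F) ⧸
          (L.map ((F.mkQ).toAddMonoidHom.comp (TensorProduct.mk ℝ ℂ W 1).toAddMonoidHom))) := by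
  classical
  let V := ℂ ⊗[ℝ] W
  let Q := (ℂ ⊗[ℝ] W) ⧸ F
  set Λ : AddSubgroup ((ℂ ⊗[ℝ] W) ⧸ F) :=
    L.map ((F.mkQ).toAddMonoidHom.comp (TensorProduct.mk ℝ ℂ W 1).toAddMonoidHom) with hΛ
  -- ℝ-continuity of scalar multiplication on Q
  haveI : ContinuousSMul ℝ ((ℂ ⊗[ℝ] W) ⧸ F) := by
    constructor
    have : (fun p : ℝ × ((ℂ ⊗[ℝ] W) ⧸ F) => p.1 • p.2) = fun p : ℝ × ((ℂ ⊗[ℝ] W) ⧸ F) => ((p.1 : ℂ)) • p.2 := by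
      funext p
      rw [← algebraMap_smul ℂ p.1 p.2]
      rfl
    rw [this]
    exact ((Complex.continuous_ofReal.comp continuous_fst).smul continuous_snd)
  haveI : FiniteDimensional ℝ ((ℂ ⊗[ℝ] W) ⧸ F) :=
    Module.Finite.of_surjective (F.mkQ.restrictScalars ℝ) (Submodule.mkQ_surjective F)
  -- σ as a real-linear involution
  have hsmulR : ∀ (r : ℝ) (v : ℂ ⊗[ℝ] W), σ (r • v) = r • σ v := by
    intro r v
    rw [← algebraMap_smul ℂ r v, σ.map_smulₛₗ]
    simp [algebraMap_smul]
    rfl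
  set σr : (ℂ ⊗[ℝ] W) →ₗ[ℝ] (ℂ ⊗[ℝ] W) :=
    { toFun := σ, map_add' := σ.map_add, map_smul' := hsmulR } with hσr
  have hinvol : ∀ v : ℂ ⊗[ℝ] W, σ (σ v) = v := by
    intro v
    induction v using TensorProduct.induction_on with
    | zero => simp
    | tmul c w => rw [hσ, hσ, RingHomCompTriple.comp_apply]; simp
    | add x y hx hy => rw [map_add, map_add, hx, hy]
  -- φ : W →ₗ[ℝ] Q
  set φ : W →ₗ[ℝ] ((ℂ ⊗[ℝ] W) ⧸ F) :=
    (F.mkQ.restrictScalars ℝ).comp (TensorProduct.mk ℝ ℂ W 1) with hφ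
  have hφ_eq : ∀ w : W, φ w =
      ((F.mkQ).toAddMonoidHom.comp (TensorProduct.mk ℝ ℂ W 1).toAddMonoidHom) w := fun _ => rfl
  -- injectivity of φ
  have hφ_inj : Function.Injective φ := by
    rw [injective_iff_map_eq_zero]
    intro w hw
    have h1 : (1 : ℂ) ⊗ₜ[ℝ] w ∈ F := by
      have := (Submodule.Quotient.mk_eq_zero F).mp hw
      exact this
    have h2 : (1 : ℂ) ⊗ₜ[ℝ] w ∈ F.map σ := by
      refine ⟨(1 : ℂ) ⊗ₜ[ℝ] w, h1, ?_⟩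
      rw [hσ]; simp
    have h3 : (1 : ℂ) ⊗ₜ[ℝ] w ∈ F ⊓ F.map σ := ⟨h1, h2⟩
    rw [hinf] at h3
    have h4 : (1 : ℂ) ⊗ₜ[ℝ] w = 0 := h3
    -- retract
    set r : (ℂ ⊗[ℝ] W) →ₗ[ℝ] W := TensorProduct.lift ((LinearMap.lsmul ℝ W).comp Complex.reLm) with hr
    have : r ((1 : ℂ) ⊗ₜ[ℝ] w) = w := by simp [hr, TensorProduct.lift.tmul]
    rw [h4, map_zero] at this
    exact this.symm
  -- dimension count: finrank ℝ W = finrank ℝ Q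
  have hdim : Module.finrank ℝ W = Module.finrank ℝ ((ℂ ⊗[ℝ] W) ⧸ F) := by
    have hVd : Module.finrank ℝ (ℂ ⊗[ℝ] W) = 2 * Module.finrank ℝ W := by
      rw [Module.finrank_tensorProduct, Complex.finrank_real_complex]
    -- ℝ-equiv F ≃ F.map σ
    have hmap : (F.restrictScalars ℝ).map σr = (F.map σ).restrictScalars ℝ := by
      ext x
      simp only [Submodule.mem_map, Submodule.restrictScalars_mem]
      rfl
    have hσr_inj : Function.Injective σr := by
      intro a b h
      have h' : σ a = σ b := h
      calc a = σ (σ a) := (hinvol a).symm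
        _ = σ (σ b) := by rw [h']
        _ = b := hinvol b
    have hFσ : Module.finrank ℝ (F.restrictScalars ℝ) =
        Module.finrank ℝ ((F.map σ).restrictScalars ℝ) := by
      rw [← hmap]
      exact (Submodule.equivMapOfInjective σr hσr_inj (F.restrictScalars ℝ)).finrank_eq
    have hF2 : Module.finrank ℝ F = 2 * Module.finrank ℂ F :=
      finrank_real_of_complex F
    have hG2 : Module.finrank ℝ (F.map σ) = 2 * Module.finrank ℂ (F.map σ) :=
      finrank_real_of_complex (F.map σ)
    have hFr : Module.finrank ℝ (F.restrictScalars ℝ) = Module.finrank ℝ F := rfl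
    have hGr : Module.finrank ℝ ((F.map σ).restrictScalars ℝ) = Module.finrank ℝ (F.map σ) := rfl
    have hkk : Module.finrank ℂ F = Module.finrank ℂ (F.map σ) := by omega
    have hsum : Module.finrank ℂ (ℂ ⊗[ℝ] W) = Module.finrank ℂ F + Module.finrank ℂ (F.map σ) := by
      have := Submodule.finrank_sup_add_finrank_inf_eq F (F.map σ)
      rw [hsup, hinf] at this
      simpa [finrank_top] using this
    have hQ2 : Module.finrank ℝ ((ℂ ⊗[ℝ] W) ⧸ F) = 2 * Module.finrank ℂ ((ℂ ⊗[ℝ] W) ⧸ F) := finrank_real_of_complex _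
    have hV2 : Module.finrank ℝ (ℂ ⊗[ℝ] W) = 2 * Module.finrank ℂ (ℂ ⊗[ℝ] W) := finrank_real_of_complex _
    have hquot : Module.finrank ℂ ((ℂ ⊗[ℝ] W) ⧸ F) + Module.finrank ℂ F = Module.finrank ℂ (ℂ ⊗[ℝ] W) :=
      Submodule.finrank_quotient_add_finrank F
    omega
  have hφ_surj : Function.Surjective φ :=
    (LinearMap.injective_iff_surjective_of_finrank_eq_finrank hdim).mp hφ_inj
  -- φ as homeomorphism
  set φe : W ≃ₗ[ℝ] ((ℂ ⊗[ℝ] W) ⧸ F) := LinearEquiv.ofBijective φ ⟨hφ_inj, hφ_surj⟩ with hφe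
  set φh : W ≃ₜ ((ℂ ⊗[ℝ] W) ⧸ F) := (φe.toContinuousLinearEquiv : W ≃L[ℝ] ((ℂ ⊗[ℝ] W) ⧸ F)).toHomeomorph with hφh
  have hφh_eq : ∀ w, φh w = φ w := fun _ => rfl
  -- Λ as image of L under φh
  have hΛset : (Λ : Set ((ℂ ⊗[ℝ] W) ⧸ F)) = φh '' (L : Set W) := by
    ext x
    simp only [hΛ, AddSubgroup.coe_map, Set.mem_image]
    constructor
    · rintro ⟨w, hw, rfl⟩; exact ⟨w, hw, (hφh_eq w).symm ▸ (hφ_eq w).symm ▸ rfl⟩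
    · rintro ⟨w, hw, rfl⟩; exact ⟨w, hw, (hφ_eq w)⟩
  haveI hΛdisc : DiscreteTopology Λ := by
    have : DiscreteTopology (φh '' (L : Set W) : Set ((ℂ ⊗[ℝ] W) ⧸ F)) :=
      (φh.image (L : Set W)).symm.isEmbedding.discreteTopology
    exact (Homeomorph.setCongr hΛset).isEmbedding.discreteTopology
  haveI hΛclosed : IsClosed (Λ : Set ((ℂ ⊗[ℝ] W) ⧸ F)) := AddSubgroup.isClosed_of_discrete
  haveI hT3 : T3Space (((ℂ ⊗[ℝ] W) ⧸ F) ⧸ Λ) := QuotientAddGroup.instT3Space Λ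
  refine ⟨?_, inferInstance⟩
  -- compactness via a lattice fundamental domain in ℝ^n
  set n := Module.finrank ℝ W with hn
  set e : W ≃ₗ[ℝ] (Fin n → ℝ) := (Module.finBasis ℝ W).equivFun with he
  set eh : W ≃ₜ (Fin n → ℝ) := (e.toContinuousLinearEquiv : W ≃L[ℝ] (Fin n → ℝ)).toHomeomorph
    with heh
  have heh_eq : ∀ w, eh w = e w := fun _ => rfl
  set LZ : Submodule ℤ (Fin n → ℝ) :=
    (AddSubgroup.toIntSubmodule L).map (e.toLinearMap.restrictScalars ℤ) with hLZ
  have hLZset : (LZ : Set (Fin n → ℝ)) = eh '' (L : Set W) := by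
    ext x
    simp only [hLZ, Submodule.map_coe, Set.mem_image]
    rfl
  haveI : DiscreteTopology LZ := by
    have : DiscreteTopology (eh '' (L : Set W) : Set (Fin n → ℝ)) :=
      (eh.image (L : Set W)).symm.isEmbedding.discreteTopology
    exact (Homeomorph.setCongr hLZset).isEmbedding.discreteTopology
  haveI : IsZLattice ℝ LZ := by
    constructor
    rw [hLZ]
    have : ((AddSubgroup.toIntSubmodule L).map (e.toLinearMap.restrictScalars ℤ) :
        Set (Fin n → ℝ)) = e '' (L : Set W) := rfl
    rw [this, ← e.coe_coe, ← Submodule.map_span, hLspan, Submodule.map_top, LinearMap.range_eq_top]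
    exact e.surjective
  set bZ := Module.Free.chooseBasis ℤ LZ with hbZ
  set b := Module.Basis.ofZLatticeBasis ℝ LZ bZ with hb
  have hbspan : Submodule.span ℤ (Set.range b) = LZ := Module.Basis.ofZLatticeBasis_span ℝ LZ bZ
  set D := closure (ZSpan.fundamentalDomain b) with hD
  have hDcomp : IsCompact D :=
    Metric.isCompact_of_isClosed_isBounded isClosed_closure
      (ZSpan.fundamentalDomain_isBounded b).closure
  -- surjection ℝ^n → Q ⧸ Λ
  set ψ : (Fin n → ℝ) → ((((ℂ ⊗[ℝ] W) ⧸ F)) ⧸ Λ) :=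
    (QuotientAddGroup.mk : ((ℂ ⊗[ℝ] W) ⧸ F) → (((ℂ ⊗[ℝ] W) ⧸ F)) ⧸ Λ) ∘ φh ∘ eh.symm with hψ
  have hψcont : Continuous ψ :=
    continuous_quot_mk.comp (φh.continuous.comp eh.symm.continuous)
  have hψsurjD : Set.univ ⊆ ψ '' D := by
    intro q _
    obtain ⟨x, rfl⟩ := QuotientAddGroup.mk_surjective q
    obtain ⟨w, rfl⟩ := φe.surjective x
    obtain ⟨v, hv, -⟩ := ZSpan.exist_unique_vadd_mem_fundamentalDomain b (e w)
    refine ⟨(v : Fin n → ℝ) +ᵥ e w, subset_closure hv, ?_⟩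
    have hvLZ : (v : Fin n → ℝ) ∈ LZ := by
      exact hbspan.le v.2
    obtain ⟨l, hl, hlv⟩ := hvLZ
    have hesymm : eh.symm ((v : Fin n → ℝ) +ᵥ e w) = l + w := by
      have : ((v : Fin n → ℝ) +ᵥ e w) = e l + e w := by
        rw [vadd_eq_add, ← hlv]; rfl
      rw [this, ← map_add]
      have : eh.symm (e (l + w)) = e.symm (e (l + w)) := rfl
      rw [this, e.symm_apply_apply]
    rw [hψ]
    simp only [Function.comp_apply, hesymm]
    have : φh (l + w) = φ l + φe w := by
      rw [hφh_eq, map_add]; rfl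
    rw [this]
    have hφlΛ : φ l ∈ Λ := ⟨l, hl, (hφ_eq l).symm⟩
    have : ((φ l + φe w : ((ℂ ⊗[ℝ] W) ⧸ F)) : (((ℂ ⊗[ℝ] W) ⧸ F)) ⧸ Λ) = ((φe w : ((ℂ ⊗[ℝ] W) ⧸ F)) : (((ℂ ⊗[ℝ] W) ⧸ F)) ⧸ Λ) := by
      rw [QuotientAddGroup.mk_add,
        show ((φ l : ((ℂ ⊗[ℝ] W) ⧸ F)) : (((ℂ ⊗[ℝ] W) ⧸ F)) ⧸ Λ) = 0 from
          (QuotientAddGroup.eq_zero_iff (φ l)).mpr hφlΛ, zero_add]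
    exact this
  have himg : IsCompact (ψ '' D) := hDcomp.image hψcont
  have huniv : (Set.univ : Set ((((ℂ ⊗[ℝ] W) ⧸ F)) ⧸ Λ)) = ψ '' D :=
    Set.eq_of_subset_of_subset hψsurjD (Set.subset_univ _)
  exact isCompact_univ_iff.mp (huniv ▸ himg)
end
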